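/- arXiv:2510.03581 — 2 statements merged into one kernel-verified Lean document; each statement's English description precedes it below -/
import Mathlib

section
/- Let T be a special coherent Aronszajn tree and let K ⊆ T. If there exists an uncountable set Z ⊆ T such that R^1_Z is uncountable, then there is an uncountable antichain X ⊆ T such that meet(X) ⊆ T \ K. -/
noncomputable section

/-- The first uncountable ordinal. -/
def omega1 : Ordinal := (Cardinal.aleph 1).ord

/-- `f` codes an element of `2^{<ω₁}` (before requiring a countable domain):
a partial function from the ordinals to `Bool` whose domain is a proper
initial segment of the ordinals. -/
def IsISeq (f : Ordinal → Option Bool) : Prop :=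
  ∃ β : Ordinal, ∀ γ : Ordinal, (f γ).isSome ↔ γ < β

/-- Elements of the tree of binary sequences indexed by an initial segment of
the ordinals. -/
def BSeq := {f : Ordinal → Option Bool // IsISeq f}

/-- The domain (length, i.e. height in `2^{<ω₁}`) of a binary sequence. -/
def sdom (f : BSeq) : Ordinal := sInf {γ : Ordinal | f.1 γ = none}

/-- The tree order on binary sequences: extension. -/
def sle (f g : BSeq) : Prop := ∀ γ : Ordinal, f.1 γ ≠ none → g.1 γ = f.1 γ

/-- Two sequences are incomparable if neither extends the other. -/
def Incomp (f g : BSeq) : Prop := ¬ sle f g ∧ ¬ sle g f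

/-- The restriction `f↾β` of a sequence `f` to `β`. -/
def srestrict (f : BSeq) (β : Ordinal) : BSeq :=
  ⟨fun γ => if γ < β then f.1 γ else none, by
    obtain ⟨δ, hδ⟩ := f.2
    refine ⟨min β δ, fun γ => ?_⟩
    by_cases h : γ < β
    · simp [h, hδ γ, lt_min_iff]
    · simp [h, lt_min_iff]⟩

/-- `Δ(f,g)`: the least ordinal in the common domain at which `f` and `g` differ. -/
def sDelta (f g : BSeq) : Ordinal :=
  sInf {γ : Ordinal | (f.1 γ).isSome ∧ (g.1 γ).isSome ∧ f.1 γ ≠ g.1 γ}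

/-- The meet `f ∧ g = f↾Δ(f,g)` of two sequences. -/
def smeet (f g : BSeq) : BSeq := srestrict f (sDelta f g)

/-- `Δ(Z,t) = {Δ(s,t) : s ∈ Z incomparable with t}`. -/
def sDeltaSet (Z : Set BSeq) (t : BSeq) : Set Ordinal :=
  {γ | ∃ s ∈ Z, Incomp s t ∧ sDelta s t = γ}

/-- A downward-closed subset of `2^{<ω₁}`. -/
def DownClosed (T : Set BSeq) : Prop := ∀ s ∈ T, ∀ t : BSeq, sle t s → t ∈ T

/-- Coherence: any two members of `T` differ at only finitely many places of their
common domain. -/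
def Coherent (T : Set BSeq) : Prop :=
  ∀ s ∈ T, ∀ t ∈ T,
    {γ : Ordinal | (s.1 γ).isSome ∧ (t.1 γ).isSome ∧ s.1 γ ≠ t.1 γ}.Finite

/-- `T` is a special coherent Aronszajn tree: a downward-closed coherent subtree of
`2^{<ω₁}` of height ω₁ with countable levels, no uncountable chain, which is the
union of countably many antichains. -/
def SpecialCoherentAronszajn (T : Set BSeq) : Prop :=
  DownClosed T ∧ Coherent T ∧
  (∀ s ∈ T, sdom s < omega1) ∧
  (∀ β : Ordinal, β < omega1 → ∃ s ∈ T, sdom s = β) ∧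
  (∀ β : Ordinal, {s : BSeq | s ∈ T ∧ sdom s = β}.Countable) ∧
  (∀ c : Set BSeq, c ⊆ T → IsChain sle c → c.Countable) ∧
  (∃ A : ℕ → Set BSeq, (∀ n, IsAntichain sle (A n)) ∧ T ⊆ ⋃ n, A n)

/-- `X` is a member of the product tree `T^⊗n`: an `n`-tuple of members of `T`
all of the same height. -/
def TupleIn (T : Set BSeq) (n : ℕ) (X : Fin n → BSeq) : Prop :=
  (∀ i, X i ∈ T) ∧ ∀ i j, sdom (X i) = sdom (X j)

/-- `K(X)`: the set of `γ` below the height of `X` with `X(i)↾γ ∈ K` for all `i`. -/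
def KX (K : Set BSeq) {n : ℕ} (X : Fin n → BSeq) : Set Ordinal :=
  {γ | (∀ i, γ < sdom (X i)) ∧ ∀ i, srestrict (X i) γ ∈ K}

/-- `R^n_Z`: the set of `X ∈ T^⊗n` such that for some `t` in the downward closure of
`Z` of the same height as `X`, `Δ(Z,t) ∩ K(X) = ∅`. -/
def RnZ (K T : Set BSeq) (n : ℕ) (Z : Set BSeq) : Set (Fin n → BSeq) :=
  {X | TupleIn T n X ∧ ∃ t : BSeq, (∃ z ∈ Z, sle t z) ∧
        (∀ i, sdom t = sdom (X i)) ∧ sDeltaSet Z t ∩ KX K X = ∅}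

/-- A subtree of `T^⊗n`: an uncountable downward-closed subset of the product tree. -/
def IsProdSubtree (T : Set BSeq) (n : ℕ) (S : Set (Fin n → BSeq)) : Prop :=
  (∀ X ∈ S, TupleIn T n X) ∧ ¬S.Countable ∧
  ∀ X Y : Fin n → BSeq, TupleIn T n X → (∀ i, sle (X i) (Y i)) → Y ∈ S → X ∈ S

/-- `𝓡_n`: the set of subtrees of `T^⊗n` of the form `R^n_Z` for an uncountable
`Z ⊆ T`. -/
def Rfam (K T : Set BSeq) (n : ℕ) : Set (Set (Fin n → BSeq)) :=
  {R | IsProdSubtree T n R ∧ ∃ Z : Set BSeq, Z ⊆ T ∧ ¬Z.Countable ∧ R = RnZ K T n Z}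

/-- `𝓡_n^⊥`: the set of subtrees of `T^⊗n` almost disjoint from every member
of `𝓡_n`. -/
def RfamPerp (K T : Set BSeq) (n : ℕ) : Set (Set (Fin n → BSeq)) :=
  {S | IsProdSubtree T n S ∧ ∀ R ∈ Rfam K T n, (S ∩ R).Countable}

section Helpers

lemma st9_sdom_unique {f : BSeq} {β : Ordinal} (h : ∀ γ, (f.1 γ).isSome ↔ γ < β) :
    sdom f = β := by
  have hset : {γ : Ordinal | f.1 γ = none} = {γ | β ≤ γ} := by
    ext γ
    simp only [Set.mem_setOf_eq, ← Option.not_isSome_iff_eq_none, h, not_lt]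
  unfold sdom
  rw [hset]
  exact le_antisymm (csInf_le' (Set.mem_setOf_eq ▸ le_rfl)) (le_csInf ⟨β, Set.mem_setOf_eq ▸ le_rfl⟩ fun b hb => hb)

lemma st9_isSome_iff (f : BSeq) (γ : Ordinal) : (f.1 γ).isSome ↔ γ < sdom f := by
  obtain ⟨β, hβ⟩ := f.2
  rw [st9_sdom_unique hβ]; exact hβ γ

lemma st9_srestrict_apply (f : BSeq) (β γ : Ordinal) :
    (srestrict f β).1 γ = if γ < β then f.1 γ else none := rfl

lemma st9_sdom_srestrict (f : BSeq) (β : Ordinal) :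
    sdom (srestrict f β) = min β (sdom f) := by
  apply st9_sdom_unique
  intro γ
  rw [st9_srestrict_apply]
  by_cases h : γ < β
  · simp [h, st9_isSome_iff, lt_min_iff]
  · simp [h, lt_min_iff]

lemma st9_sle_refl (f : BSeq) : sle f f := fun _ _ => rfl

lemma st9_srestrict_sle (f : BSeq) (β : Ordinal) : sle (srestrict f β) f := by
  intro γ h
  rw [st9_srestrict_apply] at h ⊢
  by_cases hγ : γ < β
  · simp [hγ]
  · simp [hγ] at h

lemma st9_sle_eval {f g : BSeq} (h : sle f g) {γ : Ordinal} (hγ : γ < sdom f) :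
    g.1 γ = f.1 γ := by
  apply h
  intro hnone
  have := (st9_isSome_iff f γ).2 hγ
  rw [hnone] at this
  simp at this

end Helpers

lemma st9_csInf_mem {s : Set Ordinal} (h : s.Nonempty) : sInf s ∈ s := csInf_mem h

lemma st9_incomp_of_ne {f g : BSeq} {γ : Ordinal} (hf : (f.1 γ).isSome)
    (hg : (g.1 γ).isSome) (hne : f.1 γ ≠ g.1 γ) : Incomp f g := by
  constructor
  · intro h
    exact hne (h γ (Option.isSome_iff_ne_none.mp hf)).symm
  · intro h
    exact hne (h γ (Option.isSome_iff_ne_none.mp hg))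

lemma st9_diff_nonempty {f g : BSeq} (h : Incomp f g) :
    ∃ γ, (f.1 γ).isSome ∧ (g.1 γ).isSome ∧ f.1 γ ≠ g.1 γ := by
  rcases le_total (sdom f) (sdom g) with hle | hle
  · have h1 := h.1
    unfold sle at h1
    push_neg at h1
    obtain ⟨γ, hγ1, hγ2⟩ := h1
    have hfs : (f.1 γ).isSome := Option.isSome_iff_ne_none.mpr hγ1
    have hgs : (g.1 γ).isSome := (st9_isSome_iff g γ).mpr
      (lt_of_lt_of_le ((st9_isSome_iff f γ).mp hfs) hle)
    exact ⟨γ, hfs, hgs, fun he => hγ2 he.symm⟩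
  · have h1 := h.2
    unfold sle at h1
    push_neg at h1
    obtain ⟨γ, hγ1, hγ2⟩ := h1
    have hgs : (g.1 γ).isSome := Option.isSome_iff_ne_none.mpr hγ1
    have hfs : (f.1 γ).isSome := (st9_isSome_iff f γ).mpr
      (lt_of_lt_of_le ((st9_isSome_iff g γ).mp hgs) hle)
    exact ⟨γ, hfs, hgs, fun he => hγ2 he⟩

lemma st9_sDelta_eq {f g : BSeq} {γ : Ordinal} (hlow : ∀ ξ, ξ < γ → f.1 ξ = g.1 ξ)
    (hf : (f.1 γ).isSome) (hg : (g.1 γ).isSome) (hne : f.1 γ ≠ g.1 γ) :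
    sDelta f g = γ := by
  unfold sDelta
  apply le_antisymm
  · exact csInf_le' ⟨hf, hg, hne⟩
  · refine le_csInf ⟨γ, hf, hg, hne⟩ ?_
    rintro ξ ⟨h1, h2, h3⟩
    by_contra hc
    push_neg at hc
    exact h3 (hlow ξ hc)

lemma st9_sDelta_spec {f g : BSeq} (h : Incomp f g) :
    (f.1 (sDelta f g)).isSome ∧ (g.1 (sDelta f g)).isSome ∧
      f.1 (sDelta f g) ≠ g.1 (sDelta f g) ∧ ∀ ξ, ξ < sDelta f g → f.1 ξ = g.1 ξ := by
  have hne := st9_diff_nonempty h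
  have hmem : sDelta f g ∈ {γ : Ordinal | (f.1 γ).isSome ∧ (g.1 γ).isSome ∧ f.1 γ ≠ g.1 γ} :=
    st9_csInf_mem hne
  refine ⟨hmem.1, hmem.2.1, hmem.2.2, ?_⟩
  intro ξ hξ
  by_contra hc
  have hfs : (f.1 ξ).isSome := (st9_isSome_iff f ξ).mpr
    (lt_of_lt_of_le hξ (le_of_lt ((st9_isSome_iff f _).mp hmem.1)))
  have hgs : (g.1 ξ).isSome := (st9_isSome_iff g ξ).mpr
    (lt_of_lt_of_le hξ (le_of_lt ((st9_isSome_iff g _).mp hmem.2.1)))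
  have : ξ ∈ {γ : Ordinal | (f.1 γ).isSome ∧ (g.1 γ).isSome ∧ f.1 γ ≠ g.1 γ} := ⟨hfs, hgs, hc⟩
  exact absurd (csInf_le' this) (not_le.mpr hξ)

lemma st9_optBool_eq {o₁ o₂ r : Option Bool} (h1 : o₁.isSome) (h2 : o₂.isSome)
    (hr : r.isSome) (hne1 : o₁ ≠ r) (hne2 : o₂ ≠ r) : o₁ = o₂ := by
  obtain ⟨a, rfl⟩ := Option.isSome_iff_exists.mp h1
  obtain ⟨b, rfl⟩ := Option.isSome_iff_exists.mp h2
  obtain ⟨c, rfl⟩ := Option.isSome_iff_exists.mp hr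
  cases a <;> cases b <;> cases c <;> simp_all

lemma st9_optBool_ne {o₁ o₂ r₁ r₂ : Option Bool} (h1 : o₁.isSome) (h2 : o₂.isSome)
    (hr1 : r₁.isSome) (hr2 : r₂.isSome) (hr : r₁ ≠ r₂) (hne1 : o₁ ≠ r₁) (hne2 : o₂ ≠ r₂) :
    o₁ ≠ o₂ := by
  obtain ⟨a, rfl⟩ := Option.isSome_iff_exists.mp h1
  obtain ⟨b, rfl⟩ := Option.isSome_iff_exists.mp h2
  obtain ⟨c, rfl⟩ := Option.isSome_iff_exists.mp hr1
  obtain ⟨d, rfl⟩ := Option.isSome_iff_exists.mp hr2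
  cases a <;> cases b <;> cases c <;> cases d <;> simp_all

lemma st9_P1 {α : Type*} {I : Set α} (hI : ¬I.Countable) (p : ℕ → α → Prop)
    (hcov : ∀ x ∈ I, ∃ n, p n x) : ∃ n, ¬{x ∈ I | p n x}.Countable := by
  by_contra h
  push_neg at h
  apply hI
  have hsub : I ⊆ ⋃ n, {x ∈ I | p n x} := by
    intro x hx
    obtain ⟨n, hn⟩ := hcov x hx
    exact Set.mem_iUnion.mpr ⟨n, hx, hn⟩
  exact (Set.countable_iUnion fun n => h n).mono hsub

lemma st9_P2 {α : Type*} {β : Type*} {I : Set α} (hI : ¬I.Countable) (f : α → β)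
    (hfib : ∀ b, {x ∈ I | f x = b}.Countable) :
    ∃ J, J ⊆ I ∧ ¬J.Countable ∧ Set.InjOn f J := by
  have hne : I.Nonempty := by
    rcases I.eq_empty_or_nonempty with h | h
    · exact absurd (h ▸ Set.countable_empty) hI
    · exact h
  obtain ⟨a₀, ha₀⟩ := hne
  have himg : ¬(f '' I).Countable := by
    intro hc
    apply hI
    have hsub : I ⊆ ⋃ b ∈ f '' I, {x ∈ I | f x = b} := by
      intro x hx
      exact Set.mem_biUnion ⟨x, hx, rfl⟩ ⟨hx, rfl⟩
    exact (hc.biUnion fun b _ => hfib b).mono hsub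
  have hsec : ∀ b : β, ∃ a : α, b ∈ f '' I → (a ∈ I ∧ f a = b) := by
    intro b
    by_cases hb : b ∈ f '' I
    · obtain ⟨a, ha, rfl⟩ := hb
      exact ⟨a, fun _ => ⟨ha, rfl⟩⟩
    · exact ⟨a₀, fun h => absurd h hb⟩
  choose g hg using hsec
  refine ⟨g '' (f '' I), ?_, ?_, ?_⟩
  · rintro _ ⟨b, hb, rfl⟩
    exact (hg b hb).1
  · intro hc
    apply himg
    have hsub : f '' I ⊆ f '' (g '' (f '' I)) := by
      intro b hb
      exact ⟨g b, ⟨b, hb, rfl⟩, (hg b hb).2⟩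
    exact (hc.image f).mono hsub
  · rintro _ ⟨b, hb, rfl⟩ _ ⟨b', hb', rfl⟩ h
    rw [(hg b hb).2, (hg b' hb').2] at h
    rw [h]

lemma st9_claimA (T : Set BSeq) (hDC : DownClosed T)
    (A : ℕ → Set BSeq) (hA : ∀ n, IsAntichain sle (A n)) (hAcov : T ⊆ ⋃ n, A n)
    (n : ℕ) :
    ∀ (I : Set BSeq) (t : BSeq → BSeq) (G : BSeq → Set Ordinal),
      ¬I.Countable →
      (∀ x ∈ I, t x ∈ T) →
      (∀ x ∈ I, ∀ y ∈ I, x ≠ y → Incomp (t x) (t y)) →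
      (∀ x ∈ I, (G x).Finite ∧ (G x).ncard = n ∧ ∀ ξ ∈ G x, ξ < sdom (t x)) →
      ∃ J, J ⊆ I ∧ ¬J.Countable ∧ ∀ x ∈ J, ∀ y ∈ J, x ≠ y →
        ∀ ξ ≤ sDelta (t x) (t y), (ξ ∈ G x ↔ ξ ∈ G y) := by
  induction n with
  | zero =>
    intro I t G hI htT htinc hG
    refine ⟨I, le_refl I, hI, ?_⟩
    intro x hx y hy hxy ξ hξ
    have hx0 : G x = ∅ := (Set.ncard_eq_zero (hG x hx).1).mp (hG x hx).2.1
    have hy0 : G y = ∅ := (Set.ncard_eq_zero (hG y hy).1).mp (hG y hy).2.1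
    rw [hx0, hy0]
  | succ n ih =>
    intro I t G hI htT htinc hG
    have hGne : ∀ x ∈ I, (G x).Nonempty := by
      intro x hx
      apply Set.nonempty_of_ncard_ne_zero
      rw [(hG x hx).2.1]
      exact Nat.succ_ne_zero n
    set u : BSeq → BSeq := fun x => srestrict (t x) (sInf (G x)) with hu
    have hεmem : ∀ x ∈ I, sInf (G x) ∈ G x := fun x hx => st9_csInf_mem (hGne x hx)
    have hεlt : ∀ x ∈ I, sInf (G x) < sdom (t x) :=
      fun x hx => (hG x hx).2.2 _ (hεmem x hx)
    have hudom : ∀ x ∈ I, sdom (u x) = sInf (G x) := by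
      intro x hx
      rw [hu]
      simp only
      rw [st9_sdom_srestrict]
      exact min_eq_left (le_of_lt (hεlt x hx))
    have huT : ∀ x ∈ I, u x ∈ T :=
      fun x hx => hDC (t x) (htT x hx) (u x) (st9_srestrict_sle _ _)
    by_cases hfib : ∀ b, {x ∈ I | u x = b}.Countable
    · -- many distinct u's: make them an antichain, splitting is below all of G
      obtain ⟨J₀, hJ₀I, hJ₀unc, hinj⟩ := st9_P2 hI u hfib
      obtain ⟨m, hJ₁unc⟩ := st9_P1 hJ₀unc (fun n x => u x ∈ A n)
        (fun x hx => Set.mem_iUnion.mp (hAcov (huT x (hJ₀I hx))))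
      refine ⟨{x ∈ J₀ | u x ∈ A m}, fun x hx => hJ₀I hx.1, hJ₁unc, ?_⟩
      rintro x ⟨hxJ₀, hxA⟩ y ⟨hyJ₀, hyA⟩ hxy ξ hξ
      have hxI : x ∈ I := hJ₀I hxJ₀
      have hyI : y ∈ I := hJ₀I hyJ₀
      have hune : u x ≠ u y := fun h => hxy (hinj hxJ₀ hyJ₀ h)
      have hIncu : Incomp (u x) (u y) := ⟨hA m hxA hyA hune, hA m hyA hxA hune.symm⟩
      obtain ⟨hs1, hs2, hsne, hlow⟩ := st9_sDelta_spec hIncu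
      set d := sDelta (u x) (u y) with hd
      have hd1 : d < sInf (G x) := by
        have := (st9_isSome_iff (u x) d).mp hs1
        rwa [hudom x hxI] at this
      have hd2 : d < sInf (G y) := by
        have := (st9_isSome_iff (u y) d).mp hs2
        rwa [hudom y hyI] at this
      have hux : ∀ ζ ≤ d, (u x).1 ζ = (t x).1 ζ := by
        intro ζ hζ
        rw [hu]
        simp only [st9_srestrict_apply, if_pos (lt_of_le_of_lt hζ hd1)]
      have huy : ∀ ζ ≤ d, (u y).1 ζ = (t y).1 ζ := by
        intro ζ hζ
        rw [hu]
        simp only [st9_srestrict_apply, if_pos (lt_of_le_of_lt hζ hd2)]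
      have hdt : sDelta (t x) (t y) = d := by
        apply st9_sDelta_eq
        · intro ζ hζ
          rw [← hux ζ (le_of_lt hζ), ← huy ζ (le_of_lt hζ)]
          exact hlow ζ hζ
        · rw [← hux d le_rfl]; exact hs1
        · rw [← huy d le_rfl]; exact hs2
        · rw [← hux d le_rfl, ← huy d le_rfl]; exact hsne
      rw [hdt] at hξ
      constructor
      · intro hc
        exact absurd (csInf_le' hc) (not_le.mpr (lt_of_le_of_lt hξ hd1))
      · intro hc
        exact absurd (csInf_le' hc) (not_le.mpr (lt_of_le_of_lt hξ hd2))
    · -- an uncountable fiber: remove the common minimum and induct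
      push_neg at hfib
      obtain ⟨u₀, hu₀⟩ := hfib
      set I' := {x ∈ I | u x = u₀} with hI'
      have hI'I : I' ⊆ I := fun x hx => hx.1
      have hεconst : ∀ x ∈ I', sInf (G x) = sdom u₀ := by
        intro x hx
        rw [← hudom x hx.1, hx.2]
      have hG' : ∀ x ∈ I', (G x \ {sdom u₀}).Finite ∧ (G x \ {sdom u₀}).ncard = n ∧
          ∀ ξ ∈ G x \ {sdom u₀}, ξ < sdom (t x) := by
        intro x hx
        have hxI : x ∈ I := hI'I hx
        refine ⟨(hG x hxI).1.diff, ?_, ?_⟩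
        · rw [Set.ncard_diff_singleton_of_mem (hεconst x hx ▸ hεmem x hxI),
            (hG x hxI).2.1]
          omega
        · intro ξ hξ
          exact (hG x hxI).2.2 ξ hξ.1
      obtain ⟨J, hJI', hJunc, hJ⟩ := ih I' t (fun x => G x \ {sdom u₀}) hu₀
        (fun x hx => htT x (hI'I hx))
        (fun x hx y hy hxy => htinc x (hI'I hx) y (hI'I hy) hxy)
        hG'
      refine ⟨J, hJI'.trans hI'I, hJunc, ?_⟩
      intro x hx y hy hxy ξ hξ
      by_cases hcase : ξ = sdom u₀
      · subst hcase
        constructor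
        · intro _
          rw [← hεconst y (hJI' hy)]
          exact hεmem y (hI'I (hJI' hy))
        · intro _
          rw [← hεconst x (hJI' hx)]
          exact hεmem x (hI'I (hJI' hx))
      · have := hJ x hx y hy hxy ξ hξ
        simp only [Set.mem_diff, Set.mem_singleton_iff, hcase, and_true, not_false_iff] at this
        exact this


/-- Let `T` be a special coherent Aronszajn tree and `K ⊆ T`.  If there
is an uncountable `Z ⊆ T` with `R^1_Z` uncountable, then there is an uncountable
antichain `X ⊆ T` with `meet(X) ⊆ T \ K`. -/
theorem stmt9 (T : Set BSeq) (hT : SpecialCoherentAronszajn T) (K : Set BSeq)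
    (hK : K ⊆ T)
    (hZ : ∃ Z : Set BSeq, Z ⊆ T ∧ ¬Z.Countable ∧ ¬(RnZ K T 1 Z).Countable) :
    ∃ X : Set BSeq, X ⊆ T ∧ ¬X.Countable ∧ IsAntichain sle X ∧
      ∀ s ∈ X, ∀ t ∈ X, Incomp s t → smeet s t ∈ T \ K := by
  obtain ⟨Z, hZT, hZc, hRc⟩ := hZ
  obtain ⟨hDC, hCoh, hht, hlevex, hlevc, hchain, A, hAanti, hAcov⟩ := hT
  set R1 : Set BSeq := {x : BSeq | (fun _ : Fin 1 => x) ∈ RnZ K T 1 Z} with hR1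
  have hR1c : ¬R1.Countable := by
    intro hc
    apply hRc
    have himg : RnZ K T 1 Z ⊆ (fun x => fun _ : Fin 1 => x) '' R1 := by
      intro X hX
      have hXeq : X = fun _ : Fin 1 => X 0 := funext fun i => by rw [Subsingleton.elim i 0]
      refine ⟨X 0, ?_, hXeq.symm⟩
      show (fun _ : Fin 1 => X 0) ∈ RnZ K T 1 Z
      rw [← hXeq]
      exact hX
    exact (hc.image _).mono himg
  have hwit : ∀ x ∈ R1, x ∈ T ∧ ∃ tx zx : BSeq, zx ∈ Z ∧ sle tx zx ∧ sdom tx = sdom x ∧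
      ∀ γ ∈ sDeltaSet Z tx, ¬(γ < sdom x ∧ srestrict x γ ∈ K) := by
    intro x hx
    obtain ⟨hTup, tx, ⟨zx, hz, htz⟩, hdom, hempty⟩ := hx
    refine ⟨hTup.1 0, tx, zx, hz, htz, hdom 0, ?_⟩
    rintro γ hγ ⟨h1, h2⟩
    have hmem : γ ∈ sDeltaSet Z tx ∩ KX K (fun _ : Fin 1 => x) :=
      ⟨hγ, ⟨fun _ => h1, fun _ => h2⟩⟩
    rw [hempty] at hmem
    exact hmem
  have hch : ∀ x : BSeq, ∃ p : BSeq × BSeq, x ∈ R1 →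
      (p.2 ∈ Z ∧ sle p.1 p.2 ∧ sdom p.1 = sdom x ∧
        ∀ γ ∈ sDeltaSet Z p.1, ¬(γ < sdom x ∧ srestrict x γ ∈ K)) := by
    intro x
    by_cases hx : x ∈ R1
    · obtain ⟨_, tx, zx, h⟩ := hwit x hx
      exact ⟨(tx, zx), fun _ => h⟩
    · exact ⟨(x, x), fun h => absurd h hx⟩
  choose pw hp using hch
  set tw : BSeq → BSeq := fun x => (pw x).1 with htw
  set zw : BSeq → BSeq := fun x => (pw x).2 with hzw
  have hR1T : ∀ x ∈ R1, x ∈ T := fun x hx => (hwit x hx).1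
  have htwT : ∀ x ∈ R1, tw x ∈ T :=
    fun x hx => hDC (zw x) (hZT (hp x hx).1) (tw x) (hp x hx).2.1
  have htwdom : ∀ x ∈ R1, sdom (tw x) = sdom x := fun x hx => (hp x hx).2.2.1
  -- Thin 1: distinct heights
  have hfib1 : ∀ β : Ordinal, {x ∈ R1 | sdom x = β}.Countable := by
    intro β
    apply (hlevc β).mono
    intro x hx
    exact ⟨hR1T x hx.1, hx.2⟩
  obtain ⟨I₁, hI₁R1, hI₁c, hinj⟩ := st9_P2 hR1c sdom hfib1
  -- Thin 2: the witnesses tw x form an antichain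
  obtain ⟨m, hI₂c⟩ := st9_P1 hI₁c (fun n x => tw x ∈ A n)
    (fun x hx => Set.mem_iUnion.mp (hAcov (htwT x (hI₁R1 hx))))
  set I₂ : Set BSeq := {x ∈ I₁ | tw x ∈ A m} with hI₂
  have hI₂I₁ : I₂ ⊆ I₁ := fun x hx => hx.1
  have htwinc : ∀ x ∈ I₂, ∀ y ∈ I₂, x ≠ y → Incomp (tw x) (tw y) := by
    intro x hx y hy hxy
    have hne : tw x ≠ tw y := by
      intro h
      apply hxy
      apply hinj (hI₂I₁ hx) (hI₂I₁ hy)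
      rw [← htwdom x (hI₁R1 (hI₂I₁ hx)), ← htwdom y (hI₁R1 (hI₂I₁ hy)), h]
    exact ⟨hAanti m hx.2 hy.2 hne, hAanti m hy.2 hx.2 hne.symm⟩
  -- Thin 3: constant size of the difference sets, then apply claim A
  set Fs : BSeq → Set Ordinal := fun x =>
    {ξ | (x.1 ξ).isSome ∧ ((tw x).1 ξ).isSome ∧ x.1 ξ ≠ (tw x).1 ξ} with hFs
  have hFfin : ∀ x ∈ R1, (Fs x).Finite :=
    fun x hx => hCoh x (hR1T x hx) (tw x) (htwT x hx)
  obtain ⟨n₀, hI₃c⟩ := st9_P1 hI₂c (fun n x => (Fs x).ncard = n) (fun x _ => ⟨_, rfl⟩)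
  set I₃ : Set BSeq := {x ∈ I₂ | (Fs x).ncard = n₀} with hI₃
  have hI₃R1 : I₃ ⊆ R1 := fun x hx => hI₁R1 (hI₂I₁ hx.1)
  obtain ⟨J, hJI₃, hJc, hJ⟩ := st9_claimA T hDC A hAanti hAcov n₀ I₃ tw Fs hI₃c
    (fun x hx => htwT x (hI₃R1 hx))
    (fun x hx y hy hxy => htwinc x hx.1 y hy.1 hxy)
    (fun x hx => ⟨hFfin x (hI₃R1 hx), hx.2,
      fun ξ hξ => (st9_isSome_iff (tw x) ξ).mp hξ.2.1⟩)
  have hJR1 : J ⊆ R1 := fun x hx => hI₃R1 (hJI₃ hx)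
  -- key computation
  have key : ∀ x ∈ J, ∀ y ∈ J, x ≠ y → ¬sle x y ∧ smeet x y ∈ T \ K := by
    intro x hx y hy hxy
    have hxR1 : x ∈ R1 := hJR1 hx
    have hyR1 : y ∈ R1 := hJR1 hy
    have hInc : Incomp (tw x) (tw y) := htwinc x (hJI₃ hx).1 y (hJI₃ hy).1 hxy
    obtain ⟨hs1, hs2, hsne, hlow⟩ := st9_sDelta_spec hInc
    set d := sDelta (tw x) (tw y) with hd
    have hdx : d < sdom (tw x) := (st9_isSome_iff _ _).mp hs1
    have hdy : d < sdom (tw y) := (st9_isSome_iff _ _).mp hs2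
    have hdx' : d < sdom x := htwdom x hxR1 ▸ hdx
    have hdy' : d < sdom y := htwdom y hyR1 ▸ hdy
    have hcompat : ∀ ξ ≤ d, (ξ ∈ Fs x ↔ ξ ∈ Fs y) := hJ x hx y hy hxy
    have hsome : ∀ ξ ≤ d, (x.1 ξ).isSome ∧ (y.1 ξ).isSome ∧
        ((tw x).1 ξ).isSome ∧ ((tw y).1 ξ).isSome := by
      intro ξ hξ
      exact ⟨(st9_isSome_iff _ _).mpr (lt_of_le_of_lt hξ hdx'),
        (st9_isSome_iff _ _).mpr (lt_of_le_of_lt hξ hdy'),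
        (st9_isSome_iff _ _).mpr (lt_of_le_of_lt hξ hdx),
        (st9_isSome_iff _ _).mpr (lt_of_le_of_lt hξ hdy)⟩
    have hlowxy : ∀ ξ, ξ < d → x.1 ξ = y.1 ξ := by
      intro ξ hξ
      obtain ⟨hxs, hys, htxs, htys⟩ := hsome ξ (le_of_lt hξ)
      have htxy : (tw x).1 ξ = (tw y).1 ξ := hlow ξ hξ
      by_cases hmem : ξ ∈ Fs x
      · have hmem' : ξ ∈ Fs y := (hcompat ξ (le_of_lt hξ)).mp hmem
        exact st9_optBool_eq hxs hys htxs hmem.2.2 (htxy ▸ hmem'.2.2)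
      · have hmem' : ξ ∉ Fs y := fun h => hmem ((hcompat ξ (le_of_lt hξ)).mpr h)
        have hxe : x.1 ξ = (tw x).1 ξ := by
          by_contra h
          exact hmem ⟨hxs, htxs, h⟩
        have hye : y.1 ξ = (tw y).1 ξ := by
          by_contra h
          exact hmem' ⟨hys, htys, h⟩
        rw [hxe, hye, htxy]
    have hdne : x.1 d ≠ y.1 d := by
      obtain ⟨hxs, hys, htxs, htys⟩ := hsome d le_rfl
      by_cases hmem : d ∈ Fs x
      · have hmem' : d ∈ Fs y := (hcompat d le_rfl).mp hmem
        exact st9_optBool_ne hxs hys htxs htys hsne hmem.2.2 hmem'.2.2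
      · have hmem' : d ∉ Fs y := fun h => hmem ((hcompat d le_rfl).mpr h)
        have hxe : x.1 d = (tw x).1 d := by
          by_contra h
          exact hmem ⟨hxs, htxs, h⟩
        have hye : y.1 d = (tw y).1 d := by
          by_contra h
          exact hmem' ⟨hys, htys, h⟩
        rw [hxe, hye]
        exact hsne
    have hIncxy : Incomp x y :=
      st9_incomp_of_ne (hsome d le_rfl).1 (hsome d le_rfl).2.1 hdne
    have hdel : sDelta x y = d :=
      st9_sDelta_eq hlowxy (hsome d le_rfl).1 (hsome d le_rfl).2.1 hdne
    -- the meet avoids K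
    have hzY := hp y hyR1
    have hzlow : ∀ ξ, ξ ≤ d → (zw y).1 ξ = ((tw y)).1 ξ := by
      intro ξ hξ
      exact st9_sle_eval hzY.2.1 (lt_of_le_of_lt hξ hdy)
    have hdZ : d ∈ sDeltaSet Z (tw x) := by
      refine ⟨zw y, hzY.1, ?_, ?_⟩
      · apply st9_incomp_of_ne (γ := d)
        · rw [hzlow d le_rfl]
          exact hs2
        · exact hs1
        · rw [hzlow d le_rfl]
          exact fun h => hsne h.symm
      · apply st9_sDelta_eq
        · intro ξ hξ
          rw [hzlow ξ (le_of_lt hξ)]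
          exact (hlow ξ hξ).symm
        · rw [hzlow d le_rfl]
          exact hs2
        · exact hs1
        · rw [hzlow d le_rfl]
          exact fun h => hsne h.symm
    have hnotK : srestrict x d ∉ K := by
      intro h
      exact (hp x hxR1).2.2.2 d hdZ ⟨hdx', h⟩
    refine ⟨hIncxy.1, ?_⟩
    have hmeet : smeet x y = srestrict x d := by
      unfold smeet
      rw [hdel]
    rw [hmeet]
    exact ⟨hDC x (hR1T x hxR1) _ (st9_srestrict_sle x d), hnotK⟩
  refine ⟨J, fun x hx => hR1T x (hJR1 hx), hJc, ?_, ?_⟩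
  · intro a ha b hb hne
    exact (key a ha b hb hne).1
  · intro s hs t' ht' hInc
    have hne : s ≠ t' := by
      rintro rfl
      exact hInc.1 (st9_sle_refl s)
    exact (key s hs t' ht' hne).2

end
end

section
/- If T is a special Aronszajn tree and U is a Kurepa tree, then the product tree T ⊗ U is a special Aronszajn tree which is not saturated. -/
noncomputable section

open scoped Classical in
/-- The height of an element of a tree: the order type of its set of strict
predecessors (`0` if that set is not well-ordered). -/
noncomputable def treeHeight {α : Type} [PartialOrder α] (t : α) : Ordinal :=
  if h : IsWellOrder {s : α // s < t} (fun a b => a.1 < b.1) then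
    @Ordinal.type {s : α // s < t} (fun a b => a.1 < b.1) h
  else 0

/-- An ω₁-tree: a partial order in which the strict predecessors of every element are
well-ordered, of height ω₁, all of whose levels are countable. -/
def IsOmega1Tree (α : Type) [PartialOrder α] : Prop :=
  (∀ t : α, IsWellOrder {s : α // s < t} (fun a b => a.1 < b.1)) ∧
  (∀ t : α, treeHeight t < omega1) ∧
  (∀ β : Ordinal, β < omega1 → ∃ t : α, treeHeight t = β) ∧
  (∀ β : Ordinal, {t : α | treeHeight t = β}.Countable)

/-- A subtree: an uncountable downward-closed subset. -/
def IsSubtree {α : Type} [PartialOrder α] (S : Set α) : Prop :=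
  ¬S.Countable ∧ ∀ s t : α, s ≤ t → t ∈ S → s ∈ S

/-- A family of subtrees. -/
def SubtreeFamily {α : Type} [PartialOrder α] (F : Set (Set α)) : Prop :=
  ∀ S ∈ F, IsSubtree S

/-- `perp F` is the set of subtrees almost disjoint from every member of `F`. -/
def perp {α : Type} [PartialOrder α] (F : Set (Set α)) : Set (Set α) :=
  {S | IsSubtree S ∧ ∀ W ∈ F, (S ∩ W).Countable}

/-- A family of subtrees is predense if every subtree has uncountable intersection
with some member of the family. -/
def Predense {α : Type} [PartialOrder α] (F : Set (Set α)) : Prop :=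
  ∀ S : Set α, IsSubtree S → ∃ W ∈ F, ¬(S ∩ W).Countable

/-- A tree is saturated if every antichain of subtrees (pairwise almost disjoint
family of subtrees) has cardinality less than ω₂. -/
def Saturated (α : Type) [PartialOrder α] : Prop :=
  ∀ F : Set (Set α), SubtreeFamily F →
    (∀ S ∈ F, ∀ W ∈ F, S ≠ W → (S ∩ W).Countable) →
    Cardinal.mk ↥F < Cardinal.aleph 2

/-- `C` is club in `lam`: a subset of `lam` which is unbounded in `lam` and closed,
i.e. contains every nonzero ordinal below `lam` which is a limit of members of `C`. -/
def IsClubIn (C : Set Ordinal) (lam : Ordinal) : Prop :=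
  C ⊆ Set.Iio lam ∧
  (∀ β < lam, ∃ γ ∈ C, β ≤ γ) ∧
  (∀ β < lam, β ≠ 0 → (∀ x < β, ∃ γ ∈ C, x < γ ∧ γ < β) → β ∈ C)

/-- The statement φ(T,F). -/
def Phi {α : Type} [PartialOrder α] (F : Set (Set α)) : Prop :=
  ∃ U : Ordinal → Set α, ∃ C : Set Ordinal,
    (∀ ξ < omega1, IsSubtree (U ξ)) ∧ IsClubIn C omega1 ∧
    ∀ a ∈ C, ∀ t : α, treeHeight t = a →
      ((∃ ξ < a, t ∈ U ξ ∧ U ξ ∈ perp F) ∨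
       (∃ b < a, ∀ ν ∈ C, b < ν → ν < a →
          ∃ ξ < ν, U ξ ∈ F ∧ ∃ s : α, treeHeight s = ν ∧ s ≤ t ∧ s ∈ U ξ))

/-- The statement ψ(T,F): φ(T,F) with the first alternative omitted. -/
def Psi {α : Type} [PartialOrder α] (F : Set (Set α)) : Prop :=
  ∃ U : Ordinal → Set α, ∃ C : Set Ordinal,
    (∀ ξ < omega1, IsSubtree (U ξ)) ∧ IsClubIn C omega1 ∧
    ∀ a ∈ C, ∀ t : α, treeHeight t = a →
      ∃ b < a, ∀ ν ∈ C, b < ν → ν < a →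
        ∃ ξ < ν, U ξ ∈ F ∧ ∃ s : α, treeHeight s = ν ∧ s ≤ t ∧ s ∈ U ξ

/-- An Aronszajn tree: an ω₁-tree with no uncountable chain. -/
def IsAronszajnTree (α : Type) [PartialOrder α] : Prop :=
  IsOmega1Tree α ∧ ∀ c : Set α, IsChain (· ≤ ·) c → c.Countable

/-- A special tree: the union of countably many antichains. -/
def IsSpecialTree (α : Type) [PartialOrder α] : Prop :=
  ∃ A : ℕ → Set α, (∀ n, IsAntichain (· ≤ ·) (A n)) ∧ ∀ t : α, ∃ n, t ∈ A n

/-- A cofinal branch: a chain meeting every level. -/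
def IsCofinalBranch {α : Type} [PartialOrder α] (b : Set α) : Prop :=
  IsChain (· ≤ ·) b ∧ ∀ β < omega1, ∃ t ∈ b, treeHeight t = β

/-- A Kurepa tree: an ω₁-tree with at least ω₂ cofinal branches. -/
def IsKurepaTree (α : Type) [PartialOrder α] : Prop :=
  IsOmega1Tree α ∧ Cardinal.aleph 2 ≤ Cardinal.mk {b : Set α // IsCofinalBranch b}

namespace Stmt10Aux

open Ordinal Set Cardinal

lemma countable_Iio {γ : Ordinal} (h : γ < omega1) : (Set.Iio γ).Countable := by
  rw [Cardinal.countable_iff_lt_aleph_one _, Ordinal.mk_Iio_ordinal, Cardinal.lift_lt_aleph_one]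
  exact Cardinal.lt_ord.1 h

lemma countable_heightLt {α : Type} [PartialOrder α]
    (hlev : ∀ β : Ordinal, {t : α | treeHeight t = β}.Countable)
    {γ : Ordinal} (h : γ < omega1) : {t : α | treeHeight t < γ}.Countable := by
  have : {t : α | treeHeight t < γ} = ⋃ δ ∈ Set.Iio γ, {t : α | treeHeight t = δ} := by
    ext t
    simp only [Set.mem_setOf_eq, Set.mem_iUnion, Set.mem_Iio, exists_prop]
    exact ⟨fun h => ⟨_, h, rfl⟩, fun ⟨δ, hδ, he⟩ => he ▸ hδ⟩
  rw [this]
  exact Set.Countable.biUnion (countable_Iio h) (fun δ _ => hlev δ)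

lemma uncountable_of_heights {α : Type} [PartialOrder α] {S : Set α}
    (h : ∀ γ : Ordinal, γ < omega1 → ∃ x ∈ S, treeHeight x = γ) : ¬ S.Countable := by
  intro hc
  have hsub : Set.Iio omega1 ⊆ treeHeight '' S := by
    intro γ hγ
    obtain ⟨x, hx, he⟩ := h γ hγ
    exact ⟨x, hx, he⟩
  have hcnt : (Set.Iio omega1).Countable := (hc.image treeHeight).mono hsub
  rw [Cardinal.countable_iff_lt_aleph_one _, Ordinal.mk_Iio_ordinal, Cardinal.lift_lt_aleph_one,
    omega1, Cardinal.card_ord] at hcnt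
  exact lt_irrefl _ hcnt


variable {α : Type} [PartialOrder α]

lemma treeHeight_eq (t : α) (h : IsWellOrder {s : α // s < t} (fun a b => a.1 < b.1)) :
    treeHeight t = @Ordinal.type {s : α // s < t} (fun a b => a.1 < b.1) h := by
  rw [treeHeight, dif_pos h]

section WO
variable (hwo : ∀ t : α, IsWellOrder {s : α // s < t} (fun a b => a.1 < b.1))
include hwo

lemma treeHeight_eq_typein {s t : α} (hst : s < t) :
    treeHeight s = @Ordinal.typein _ (fun a b : {x : α // x < t} => a.1 < b.1) (hwo t)
      ⟨s, hst⟩ := by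
  haveI := hwo t
  rw [treeHeight_eq s (hwo s), ← Ordinal.type_subrel]
  refine Ordinal.type_eq.2 ⟨RelIso.mk (Equiv.mk
    (fun x => ⟨⟨x.1, x.2.trans hst⟩, x.2⟩)
    (fun y => ⟨y.1.1, y.2⟩) (fun x => rfl) (fun y => rfl)) ?_⟩
  intro a b
  exact Iff.rfl

lemma treeHeight_lt {s t : α} (hst : s < t) : treeHeight s < treeHeight t := by
  haveI := hwo t
  rw [treeHeight_eq_typein hwo hst, treeHeight_eq t (hwo t)]
  exact Ordinal.typein_lt_type _ _

lemma exists_lt_of_lt_treeHeight {t : α} {δ : Ordinal} (h : δ < treeHeight t) :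
    ∃ s : α, s < t ∧ treeHeight s = δ := by
  haveI := hwo t
  rw [treeHeight_eq t (hwo t)] at h
  obtain ⟨a, ha⟩ := Ordinal.typein_surj _ h
  exact ⟨a.1, a.2, by rw [treeHeight_eq_typein hwo a.2]; exact ha⟩

lemma comparable_of_le_le {s s' t : α} (hs : s ≤ t) (hs' : s' ≤ t) : s ≤ s' ∨ s' ≤ s := by
  haveI := hwo t
  rcases eq_or_lt_of_le hs with rfl | hs
  · exact Or.inr hs'
  rcases eq_or_lt_of_le hs' with rfl | hs'
  · exact Or.inl hs.le
  rcases @trichotomous _ (fun a b : {x : α // x < t} => a.1 < b.1) _ ⟨s, hs⟩ ⟨s', hs'⟩ with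
    h | h | h
  · exact Or.inl h.le
  · exact Or.inl (le_of_eq (congrArg Subtype.val h))
  · exact Or.inr h.le

lemma eq_of_height_eq {s s' t : α} (hs : s ≤ t) (hs' : s' ≤ t)
    (hh : treeHeight s = treeHeight s') : s = s' := by
  rcases comparable_of_le_le hwo hs hs' with h | h
  · rcases eq_or_lt_of_le h with h | h
    · exact h
    · exact absurd hh (treeHeight_lt hwo h).ne
  · rcases eq_or_lt_of_le h with h | h
    · exact h.symm
    · exact absurd hh.symm (treeHeight_lt hwo h).ne

end WO

section Prod

variable {β : Type} [PartialOrder β]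
abbrev ProdTree (α β : Type) [PartialOrder α] [PartialOrder β] : Type :=
  {p : α × β // treeHeight p.1 = treeHeight p.2}

variable (hwoα : ∀ t : α, IsWellOrder {s : α // s < t} (fun a b => a.1 < b.1))
variable (hwoβ : ∀ t : β, IsWellOrder {s : β // s < t} (fun a b => a.1 < b.1))



lemma le_coords {p q : ProdTree α β} (h : q ≤ p) : q.1.1 ≤ p.1.1 ∧ q.1.2 ≤ p.1.2 :=
  Prod.le_def.1 (Subtype.coe_le_coe.2 h)

lemma le_of_coords {p q : ProdTree α β} (h1 : q.1.1 ≤ p.1.1) (h2 : q.1.2 ≤ p.1.2) : q ≤ p :=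
  Subtype.coe_le_coe.1 (Prod.le_def.2 ⟨h1, h2⟩)

include hwoβ in
lemma snd_eq {p q q' : ProdTree α β} (h : q ≤ p) (h' : q' ≤ p) (hf : q.1.1 = q'.1.1) : q = q' := by
  have hh : treeHeight q.1.2 = treeHeight q'.1.2 := by rw [← q.2, ← q'.2, hf]
  exact Subtype.ext (Prod.ext hf
    (eq_of_height_eq hwoβ (le_coords h).2 (le_coords h').2 hh))

include hwoα in
lemma fst_eq {p q q' : ProdTree α β} (h : q ≤ p) (h' : q' ≤ p) (hf : q.1.2 = q'.1.2) : q = q' := by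
  have hh : treeHeight q.1.1 = treeHeight q'.1.1 := by rw [q.2, q'.2, hf]
  exact Subtype.ext (Prod.ext
    (eq_of_height_eq hwoα (le_coords h).1 (le_coords h').1 hh) hf)

include hwoα hwoβ in
lemma coords_lt {p q : ProdTree α β} (h : q < p) : q.1.1 < p.1.1 ∧ q.1.2 < p.1.2 := by
  have h1 := (le_coords h.le).1
  have h2 := (le_coords h.le).2
  constructor
  · exact lt_of_le_of_ne h1 (fun he => h.ne (snd_eq hwoβ h.le le_rfl he))
  · exact lt_of_le_of_ne h2 (fun he => h.ne (fst_eq hwoα h.le le_rfl he))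

include hwoα hwoβ in
lemma lt_of_fst_lt {p q q' : ProdTree α β} (hq : q ≤ p) (hq' : q' ≤ p) (h : q.1.1 < q'.1.1) :
    q < q' := by
  have hh : treeHeight q.1.2 < treeHeight q'.1.2 := by
    rw [← q.2, ← q'.2]; exact treeHeight_lt hwoα h
  have h2 : q.1.2 ≤ q'.1.2 := by
    rcases comparable_of_le_le hwoβ (le_coords hq).2 (le_coords hq').2 with hc | hc
    · exact hc
    · rcases eq_or_lt_of_le hc with he | hlt
      · rw [he] at hh; exact absurd hh (lt_irrefl _)
      · exact absurd hh (asymm (treeHeight_lt hwoβ hlt))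
  exact lt_of_le_of_ne (le_of_coords h.le h2)
    (fun he => absurd (congrArg (fun x => x.1.1) he) h.ne)

include hwoα hwoβ in
lemma prod_height (p : ProdTree α β) :
    IsWellOrder {q : ProdTree α β // q < p} (fun a b => a.1 < b.1) ∧ treeHeight p = treeHeight p.1.1 := by
  set f : {q : ProdTree α β // q < p} → {s : α // s < p.1.1} :=
    fun q => ⟨q.1.1.1, (coords_lt hwoα hwoβ q.2).1⟩ with hf
  have hbij : Function.Bijective f := by
    constructor
    · intro a b hab
      exact Subtype.ext (snd_eq hwoβ a.2.le b.2.le (congrArg Subtype.val hab))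
    · intro s
      have hδ : treeHeight s.1 < treeHeight p.1.2 := by
        rw [← p.2]; exact treeHeight_lt hwoα s.2
      obtain ⟨v, hv, hvh⟩ := exists_lt_of_lt_treeHeight hwoβ hδ
      refine ⟨⟨⟨(s.1, v), hvh.symm⟩, ?_⟩, rfl⟩
      exact lt_of_le_of_ne (Subtype.coe_le_coe.1 (Prod.le_def.2 ⟨s.2.le, hv.le⟩))
        (fun he => s.2.ne (congrArg (fun x => x.1.1) he))
  set e : RelIso (fun a b : {q : ProdTree α β // q < p} => a.1 < b.1)
      (fun a b : {s : α // s < p.1.1} => a.1 < b.1) :=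
    RelIso.mk (Equiv.ofBijective f hbij)
      (fun {a b} => ⟨fun h => lt_of_fst_lt hwoα hwoβ a.2.le b.2.le h,
        fun h => (coords_lt hwoα hwoβ h).1⟩) with he
  haveI := hwoα p.1.1
  haveI hw : IsWellOrder {q : ProdTree α β // q < p} (fun a b => a.1 < b.1) :=
    e.toRelEmbedding.isWellOrder
  refine ⟨hw, ?_⟩
  rw [treeHeight_eq p hw, treeHeight_eq p.1.1 (hwoα p.1.1)]
  exact Ordinal.type_eq.2 ⟨e⟩

end Prod


section Branch
open Ordinal Set Cardinal
variable {α : Type} [PartialOrder α]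
variable (hwo : ∀ t : α, IsWellOrder {s : α // s < t} (fun a b => a.1 < b.1))
variable (hh : ∀ t : α, treeHeight t < omega1)
include hwo hh

lemma branch_mem_of_le {b : Set α} (hb : IsCofinalBranch b) {v u : α}
    (h : v ≤ u) (hu : u ∈ b) : v ∈ b := by
  obtain ⟨w, hw, hwh⟩ := hb.2 (treeHeight v) (hh v)
  by_cases he : u = w
  · subst he
    exact (eq_of_height_eq hwo h le_rfl hwh.symm) ▸ hu
  · rcases hb.1 hu hw he with hc | hc
    · exact (eq_of_height_eq hwo (h.trans hc) le_rfl hwh.symm) ▸ hw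
    · exact (eq_of_height_eq hwo h hc hwh.symm) ▸ hw

lemma branch_diverge {b b' : Set α} (hb : IsCofinalBranch b) (hb' : IsCofinalBranch b')
    {u : α} (hub : u ∈ b) (hub' : u ∉ b') : ∀ x ∈ b ∩ b', treeHeight x < treeHeight u := by
  rintro x ⟨hx, hx'⟩
  have hne : x ≠ u := fun he => hub' (he ▸ hx')
  rcases hb.1 hx hub hne with hc | hc
  · exact treeHeight_lt hwo (lt_of_le_of_ne hc hne)
  · exact absurd (branch_mem_of_le hwo hh hb' hc hx') hub'

end Branch

end Stmt10Aux


/-- If `T` is a special Aronszajn tree and `U` is a Kurepa tree, then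
the product tree `T ⊗ U` is a special Aronszajn tree which is not saturated. -/
theorem stmt10 {α β : Type} [PartialOrder α] [PartialOrder β]
    (hTA : IsAronszajnTree α) (hTs : IsSpecialTree α) (hU : IsKurepaTree β) :
    IsAronszajnTree {p : α × β // treeHeight p.1 = treeHeight p.2} ∧
    IsSpecialTree {p : α × β // treeHeight p.1 = treeHeight p.2} ∧
    ¬ Saturated {p : α × β // treeHeight p.1 = treeHeight p.2} := by
  obtain ⟨hTt, hTchain⟩ := hTA
  obtain ⟨hwoα, hThlt, hTonto, hTlev⟩ := hTt
  obtain ⟨hUt, hUbr⟩ := hU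
  obtain ⟨hwoβ, hUhlt, hUonto, hUlev⟩ := hUt
  have hPh : ∀ p : {p : α × β // treeHeight p.1 = treeHeight p.2},
      treeHeight p = treeHeight p.1.1 := fun p => (Stmt10Aux.prod_height hwoα hwoβ p).2
  have hPwo : ∀ p : {p : α × β // treeHeight p.1 = treeHeight p.2},
      IsWellOrder {q : {p : α × β // treeHeight p.1 = treeHeight p.2} // q < p}
        (fun a b => a.1 < b.1) := fun p => (Stmt10Aux.prod_height hwoα hwoβ p).1
  have hPtree : IsOmega1Tree {p : α × β // treeHeight p.1 = treeHeight p.2} := by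
    refine ⟨hPwo, fun p => by rw [hPh p]; exact hThlt _, ?_, ?_⟩
    · intro γ hγ
      obtain ⟨t, ht⟩ := hTonto γ hγ
      obtain ⟨u, hu⟩ := hUonto γ hγ
      exact ⟨⟨(t, u), by rw [ht, hu]⟩, by rw [hPh]; exact ht⟩
    · intro γ
      have hsub : {p : {p : α × β // treeHeight p.1 = treeHeight p.2} | treeHeight p = γ} ⊆
          Subtype.val ⁻¹' ({t : α | treeHeight t = γ} ×ˢ {v : β | treeHeight v = γ}) := by
        intro p hp
        have h1 : treeHeight p.1.1 = γ := by rw [← hPh p]; exact hp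
        refine ⟨h1, ?_⟩
        show treeHeight (p : α × β).2 = γ
        rw [← p.2]; exact h1
      exact Set.Countable.mono hsub
        (((hTlev γ).prod (hUlev γ)).preimage Subtype.val_injective)
  have hPar : ∀ c : Set {p : α × β // treeHeight p.1 = treeHeight p.2},
      IsChain (· ≤ ·) c → c.Countable := by
    intro c hc
    have himg : IsChain (· ≤ ·)
        ((fun p : {p : α × β // treeHeight p.1 = treeHeight p.2} => p.1.1) '' c) := by
      rintro _ ⟨p, hp, rfl⟩ _ ⟨q, hq, rfl⟩ hne
      have hpq : p ≠ q := fun he => hne (by rw [he])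
      rcases hc hp hq hpq with h | h
      · exact Or.inl (Stmt10Aux.le_coords h).1
      · exact Or.inr (Stmt10Aux.le_coords h).1
    have hinj : Set.InjOn
        (fun p : {p : α × β // treeHeight p.1 = treeHeight p.2} => p.1.1) c := by
      intro p hp q hq he
      by_contra hne
      rcases hc hp hq hne with h | h
      · exact hne (Stmt10Aux.snd_eq hwoβ h le_rfl he)
      · exact hne ((Stmt10Aux.snd_eq hwoβ h le_rfl he.symm).symm)
    exact (Set.mapsTo_image _ c).countable_of_injOn hinj (hTchain _ himg)
  obtain ⟨A, hAanti, hAcov⟩ := hTs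
  refine ⟨⟨hPtree, hPar⟩, ⟨fun n => {p | p.1.1 ∈ A n}, ?_, fun p => hAcov p.1.1⟩, ?_⟩
  · intro n p hp q hq hne hle
    by_cases he : p.1.1 = q.1.1
    · exact hne (Stmt10Aux.snd_eq hwoβ hle le_rfl he)
    · exact hAanti n hp hq he (Stmt10Aux.le_coords hle).1
  · intro hsat
    set Sb : Set β → Set {p : α × β // treeHeight p.1 = treeHeight p.2} :=
      fun b => {p | p.1.2 ∈ b} with hSbdef
    set F : Set (Set {p : α × β // treeHeight p.1 = treeHeight p.2}) :=
      Sb '' {b | IsCofinalBranch b} with hFdef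
    have hsubtree : ∀ b : Set β, IsCofinalBranch b → IsSubtree (Sb b) := by
      intro b hb
      constructor
      · apply Stmt10Aux.uncountable_of_heights
        intro γ hγ
        obtain ⟨t, ht⟩ := hTonto γ hγ
        obtain ⟨u, hu, huh⟩ := hb.2 γ hγ
        exact ⟨⟨(t, u), by rw [ht, huh]⟩, hu, by rw [hPh]; exact ht⟩
      · intro q q' hle hq'
        exact Stmt10Aux.branch_mem_of_le hwoβ hUhlt hb (Stmt10Aux.le_coords hle).2 hq'
    have hfam : SubtreeFamily F := by
      rintro S ⟨b, hb, rfl⟩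
      exact hsubtree b hb
    have hdisj0 : ∀ b b' : Set β, IsCofinalBranch b → IsCofinalBranch b' → b ≠ b' →
        (Sb b ∩ Sb b').Countable := by
      intro b b' hb hb' hne
      have key : ∃ γ, γ < omega1 ∧ ∀ x ∈ b ∩ b', treeHeight x < γ := by
        by_cases hss : b ⊆ b'
        · have hns : ¬ b' ⊆ b := fun h => hne (Set.Subset.antisymm hss h)
          obtain ⟨u, hu, hnu⟩ := Set.not_subset.1 hns
          exact ⟨treeHeight u, hUhlt u, fun x hx =>
            Stmt10Aux.branch_diverge hwoβ hUhlt hb' hb hu hnu x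
              (by rwa [Set.inter_comm] at hx)⟩
        · obtain ⟨u, hu, hnu⟩ := Set.not_subset.1 hss
          exact ⟨treeHeight u, hUhlt u, Stmt10Aux.branch_diverge hwoβ hUhlt hb hb' hu hnu⟩
      obtain ⟨γ, hγ, hkey⟩ := key
      have hsub : Sb b ∩ Sb b' ⊆
          Subtype.val ⁻¹' ({t : α | treeHeight t < γ} ×ˢ {v : β | treeHeight v < γ}) := by
        rintro p ⟨hp, hp'⟩
        have h2 : treeHeight p.1.2 < γ := hkey _ ⟨hp, hp'⟩
        exact ⟨by rw [Set.mem_setOf_eq, p.2]; exact h2, h2⟩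
      exact Set.Countable.mono hsub
        (((Stmt10Aux.countable_heightLt hTlev hγ).prod
          (Stmt10Aux.countable_heightLt hUlev hγ)).preimage Subtype.val_injective)
    have hdisj : ∀ S ∈ F, ∀ W ∈ F, S ≠ W → (S ∩ W).Countable := by
      rintro _ ⟨b, hb, rfl⟩ _ ⟨b', hb', rfl⟩ hne
      exact hdisj0 b b' hb hb' (fun he => hne (by rw [he]))
    have hcard := hsat F hfam hdisj
    have hinj : Function.Injective
        (fun b : {b : Set β // IsCofinalBranch b} => (⟨Sb b.1, ⟨b.1, b.2, rfl⟩⟩ : F)) := by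
      intro b b' he
      have hSe : Sb b.1 = Sb b'.1 := congrArg Subtype.val he
      have key : ∀ x : Set β, ∀ y : Set β, Sb x = Sb y → x ⊆ y := by
        intro x y hSxy v hv
        obtain ⟨t, ht⟩ := hTonto (treeHeight v) (hUhlt v)
        have hmem : (⟨(t, v), ht⟩ : {p : α × β // treeHeight p.1 = treeHeight p.2}) ∈ Sb x := hv
        rw [hSxy] at hmem
        exact hmem
      exact Subtype.ext (Set.Subset.antisymm (key b.1 b'.1 hSe) (key b'.1 b.1 hSe.symm))
    exact absurd hcard (not_lt.2 (le_trans hUbr (Cardinal.mk_le_of_injective hinj)))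


end
end
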